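/- arXiv:2604.27588 — 2 statements merged into one kernel-verified Lean document; each statement's English description precedes it below -/
import Mathlib

section
/- Let ∇ be the commutative integral quantale of non-increasing functions (0,∞) → [0,∞] with operation (f ⊕ g)(t) = inf_{r+s=t}(f(r)+g(s)) and opposite pointwise order. Then the category of ∇-enriched categories (∇-Cat) is isomorphic to the category of quasi-pseudometric modular spaces with nonexpansive maps, via a(x,y)(t) = w(t,x,y). -/
/-!
Since `∇` carries the opposite pointwise order, its top is the constant `0` function and
`f ≤ g` means `g(t) ≤ f(t)` for all `t`; and `f ⊕ g ≤ h` unfolds to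
`h(r + s) ≤ f(r) + g(s)` for all `r, s > 0`. Read through `w(t,x,y) = a(x,y)(t)`, the
`∇`-category axioms and `∇`-functoriality are thus literally the modular axioms and
nonexpansiveness. The one non-formal point is that every modular is non-increasing in `t`
(`w(t+s,x,y) ≤ w(t,x,y) + w(s,y,y) = w(t,x,y)`), so it really defines elements of `∇`.
-/

open scoped ENNReal

/-- The positive reals `(0,∞)`. -/
abbrev Rpos : Type := {t : ℝ // 0 < t}

/-- `∇`: the isotone functions `(0,∞) → [0,∞]ᵒᵖ`, i.e. non-increasing
`[0,∞]`-valued functions on `(0,∞)`, with the opposite pointwise order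
(so the constant `0` function is the top element). -/
abbrev Nabla : Type := Rpos →o ℝ≥0∞ᵒᵈ

/-- `a` is well-below `b`. -/
def wellBelow {L : Type*} [CompleteLattice L] (a b : L) : Prop :=
  ∀ S : Set L, b ≤ sSup S → ∃ s ∈ S, a ≤ s

/-- The quantale operation `(f ⊕ g)(t) = inf_{r+s=t} (f(r)+g(s))`. -/
noncomputable def oplus (f g : Nabla) : Nabla where
  toFun t := OrderDual.toDual (⨅ (r : Rpos) (s : Rpos) (_ : r.1 + s.1 = t.1),
    (OrderDual.ofDual (f r) + OrderDual.ofDual (g s)))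
  monotone' := by
    intro a b hab
    rw [OrderDual.toDual_le_toDual]
    refine le_iInf fun r => le_iInf fun s => le_iInf fun hrs => ?_
    have hδ : (0:ℝ) ≤ b.1 - a.1 := sub_nonneg.2 hab
    have hs' : (0:ℝ) < s.1 + (b.1 - a.1) := add_pos_of_pos_of_nonneg s.2 hδ
    have h1 : (⨅ (r' : Rpos) (s' : Rpos) (_ : r'.1 + s'.1 = b.1),
        (OrderDual.ofDual (f r') + OrderDual.ofDual (g s'))) ≤
        OrderDual.ofDual (f r) + OrderDual.ofDual (g ⟨s.1 + (b.1 - a.1), hs'⟩) := by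
      refine iInf_le_of_le r (iInf_le_of_le ⟨s.1 + (b.1 - a.1), hs'⟩
        (iInf_le_of_le ?_ le_rfl))
      simp only
      linarith [hrs]
    refine h1.trans (add_le_add le_rfl ?_)
    exact OrderDual.ofDual_le_ofDual.2 (g.monotone (show s.1 ≤ s.1 + (b.1 - a.1) by linarith))

namespace Nabla

theorem le_iff {f g : Nabla} : f ≤ g ↔ ∀ t, OrderDual.ofDual (g t) ≤ OrderDual.ofDual (f t) :=
  Iff.rfl

theorem top_le_iff {f : Nabla} : ⊤ ≤ f ↔ ∀ t, OrderDual.ofDual (f t) = 0 :=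
  forall_congr' fun _ => OrderDual.ofDual_le_ofDual.symm.trans nonpos_iff_eq_zero

theorem ofDual_oplus_apply (f g : Nabla) (t : Rpos) :
    OrderDual.ofDual (oplus f g t) = ⨅ (r : Rpos) (s : Rpos) (_ : r.1 + s.1 = t.1),
      (OrderDual.ofDual (f r) + OrderDual.ofDual (g s)) :=
  rfl

theorem oplus_le_iff {f g h : Nabla} :
    oplus f g ≤ h ↔ ∀ r s : Rpos,
      OrderDual.ofDual (h ⟨r.1 + s.1, add_pos r.2 s.2⟩) ≤
        OrderDual.ofDual (f r) + OrderDual.ofDual (g s) := by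
  refine ⟨fun hle r s => ?_, fun H t => ?_⟩
  · calc OrderDual.ofDual (h ⟨r.1 + s.1, _⟩)
        ≤ OrderDual.ofDual (oplus f g ⟨r.1 + s.1, add_pos r.2 s.2⟩) := hle _
      _ ≤ _ := by rw [ofDual_oplus_apply]; exact iInf₂_le_of_le r s (iInf_le _ rfl)
  change OrderDual.ofDual (h t) ≤ OrderDual.ofDual (oplus f g t)
  rw [ofDual_oplus_apply]
  refine le_iInf₂ fun r s => le_iInf fun hrs => ?_
  obtain rfl : t = ⟨r.1 + s.1, add_pos r.2 s.2⟩ := Subtype.ext hrs.symm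
  exact H r s

end Nabla

theorem modular_antitone {X : Type*} {w : ℝ → X → X → ℝ≥0∞}
    (hrefl : ∀ t : ℝ, 0 < t → ∀ x : X, w t x x = 0)
    (htri : ∀ (x y z : X) (t s : ℝ), 0 < t → 0 < s → w (t + s) x y ≤ w t x z + w s z y)
    (x y : X) {t t' : ℝ} (ht : 0 < t) (htt' : t ≤ t') : w t' x y ≤ w t x y := by
  rcases htt'.eq_or_lt with rfl | hlt
  · exact le_rfl
  · have hpos : 0 < t' - t := sub_pos.2 hlt
    calc w t' x y = w (t + (t' - t)) x y := by rw [add_sub_cancel]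
      _ ≤ w t x y + w (t' - t) y y := htri x y y t _ ht hpos
      _ = w t x y := by rw [hrefl _ hpos, add_zero]

/-- the category of `∇`-categories is isomorphic to the category of
quasi-pseudometric modular spaces with nonexpansive maps, via
`a(x,y)(t) = w(t,x,y)`.  We express the isomorphism by: (i) a map
`a : X × X → ∇` satisfies the `∇`-category axioms iff the corresponding
`w(t,x,y) = a(x,y)(t)` is a quasi-pseudometric modular; (ii) `f` is a
`∇`-functor iff it is nonexpansive for the corresponding modulars; and (iii)
every quasi-pseudometric modular arises from a (unique such) `a`. -/
theorem stmt_17 {X Y : Type*} :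
    -- (i) objects correspond
    (∀ a : X → X → Nabla,
      ((∀ x : X, (⊤ : Nabla) ≤ a x x) ∧
        (∀ x y z : X, oplus (a x z) (a z y) ≤ a x y)) ↔
      ((∀ (t : Rpos) (x : X), OrderDual.ofDual (a x x t) = 0) ∧
        (∀ (x y z : X) (t s : Rpos),
          OrderDual.ofDual (a x y ⟨t.1 + s.1, add_pos t.2 s.2⟩) ≤
            OrderDual.ofDual (a x z t) + OrderDual.ofDual (a z y s)))) ∧
    -- (ii) morphisms correspond
    (∀ (a : X → X → Nabla) (b : Y → Y → Nabla) (f : X → Y),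
      (∀ x y : X, a x y ≤ b (f x) (f y)) ↔
      (∀ (x y : X) (t : Rpos),
        OrderDual.ofDual (b (f x) (f y) t) ≤ OrderDual.ofDual (a x y t))) ∧
    -- (iii) every quasi-pseudometric modular arises from a `∇`-structure
    (∀ w : ℝ → X → X → ℝ≥0∞,
      (∀ t : ℝ, 0 < t → ∀ x : X, w t x x = 0) →
      (∀ (x y z : X) (t s : ℝ), 0 < t → 0 < s →
        w (t + s) x y ≤ w t x z + w s z y) →
      ∃ a : X → X → Nabla, ∀ (t : Rpos) (x y : X),
        OrderDual.ofDual (a x y t) = w t.1 x y) := by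
  refine ⟨fun a => ?_, fun a b f => ?_, fun w hrefl htri => ?_⟩
  · simp only [Nabla.top_le_iff, Nabla.oplus_le_iff]
    exact and_congr forall_comm Iff.rfl
  · simp only [Nabla.le_iff]
  · refine ⟨fun x y => ⟨fun t => OrderDual.toDual (w t.1 x y), fun t t' htt' => ?_⟩,
      fun _ _ _ => rfl⟩
    exact modular_antitone hrefl htri x y t.2 htt'
end

section
/- Let (X,w) be a quasi-pseudometric modular space, and let a_w(x,y)(t) = w(t,x,y) be the corresponding ∇-category structure. Then the topology T(w) generated by the modular entourages W_{t,ε}(x) = {y : w(t,x,y) < ε} coincides with the Flagg open-ball topology T(a_w), which has as base the balls B(x,g) = {y : g ◁ a_w(x,y)} for g ∈ ∇ with g ◁ 𝟎. -/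
open scoped ENNReal

/-- A set is open for the topology associated to a quasi-pseudometric modular `w`
iff every point has a basic modular neighborhood `W_{t,ε}(x)` inside it. -/
def modOpen {X : Type*} (w : ℝ → X → X → ℝ≥0∞) (G : Set X) : Prop :=
  ∀ x ∈ G, ∃ t ε : ℝ, 0 < t ∧ 0 < ε ∧ {y : X | w t x y < ENNReal.ofReal ε} ⊆ G

/-!
Both topologies are generated by neighbourhoods of the same shape. The step function
`f_{t,ε}` (`∞` before `t`, `ε` from `t` on) is well below every `f ∈ ∇` with `f(t) < ε`, in
particular below `𝟎`, so `W_{t,ε}(x) ⊆ B(x, f_{t,ε})`; and since `f ◁ h` implies `f ≤ h`,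
`B(x, f_{t,ε/2}) ⊆ W_{t,ε}(x)`.
Conversely `𝟎` is the supremum of all step functions, so any `g ◁ 𝟎` lies below one of them,
and `B(x, g)` contains the corresponding entourage.
-/

open OrderDual

noncomputable def stepFn (t : Rpos) (ε : ℝ≥0∞) : Nabla where
  toFun r := toDual (if r.1 < t.1 then ⊤ else ε)
  monotone' r r' hrr' := by
    rw [toDual_le_toDual]
    split_ifs with h h'
    · exact le_rfl
    · exact absurd (hrr'.trans_lt h) h'
    · exact le_top
    · exact le_rfl

section WellBelow

variable {L : Type*} [CompleteLattice L] {a a' b : L}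

theorem wellBelow.le (h : wellBelow a b) : a ≤ b := by
  obtain ⟨s, hs, has⟩ := h {b} (le_sSup rfl)
  rwa [hs] at has

theorem wellBelow.mono_left (ha : a' ≤ a) (h : wellBelow a b) : wellBelow a' b := fun S hS =>
  let ⟨s, hs, has⟩ := h S hS
  ⟨s, hs, ha.trans has⟩

end WellBelow

theorem stepFn_le_iff {t : Rpos} {ε : ℝ≥0∞} {f : Nabla} :
    stepFn t ε ≤ f ↔ ofDual (f t) ≤ ε := by
  refine ⟨fun h => toDual_le.1 (by simpa [stepFn] using h t), fun h r => ?_⟩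
  change ofDual (f r) ≤ if r.1 < t.1 then ⊤ else ε
  split_ifs with hr
  · exact le_top
  · exact (ofDual_le_ofDual.2 (f.monotone (not_lt.1 hr))).trans h

theorem wellBelow_stepFn {t : Rpos} {ε : ℝ≥0∞} {f : Nabla} (h : ofDual (f t) < ε) :
    wellBelow (stepFn t ε) f := by
  intro S hS
  have hinf : ⨅ g ∈ S, ofDual (g t) < ε :=
    lt_of_le_of_lt (show ⨅ g ∈ S, ofDual (g t) ≤ ofDual (f t) from hS t) h
  obtain ⟨g, hgS, hg⟩ := by simpa only [iInf_lt_iff, exists_prop] using hinf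
  exact ⟨g, hgS, stepFn_le_iff.2 hg.le⟩

theorem stepFn_wellBelow_top {t : Rpos} {ε : ℝ≥0∞} (hε : 0 < ε) :
    wellBelow (stepFn t ε) (⊤ : Nabla) :=
  wellBelow_stepFn hε

theorem sSup_eq_top_of_stepFn_mem {S : Set Nabla}
    (hS : ∀ (t : Rpos) (ε : ℝ), 0 < ε → stepFn t (ENNReal.ofReal ε) ∈ S) : sSup S = ⊤ := by
  refine le_antisymm le_top ?_
  intro p
  change ofDual (sSup S p) ≤ 0
  refine ENNReal.le_of_forall_pos_le_add fun ε hε _ => ?_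
  calc ofDual (sSup S p) ≤ ofDual (stepFn p (ENNReal.ofReal ε) p) := le_sSup (hS p ε hε) p
    _ = 0 + ε := by simp [stepFn]

theorem exists_stepFn_le_of_wellBelow_top {g : Nabla} (hg : wellBelow g ⊤) :
    ∃ (t : Rpos) (ε : ℝ), 0 < ε ∧ g ≤ stepFn t (ENNReal.ofReal ε) := by
  obtain ⟨f, ⟨t, ε, hε, rfl⟩, hgf⟩ :=
    hg {f | ∃ (t : Rpos) (ε : ℝ), 0 < ε ∧ f = stepFn t (ENNReal.ofReal ε)}
      (sSup_eq_top_of_stepFn_mem fun t ε hε => by exact ⟨t, ε, hε, rfl⟩).ge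
  exact ⟨t, ε, hε, hgf⟩

theorem stmt_19_general {X : Type*} (w : ℝ → X → X → ℝ≥0∞)
    (a : X → X → Nabla)
    (ha : ∀ (t : Rpos) (x y : X), OrderDual.ofDual (a x y t) = w t.1 x y) :
    ∀ G : Set X,
      modOpen w G ↔
        ∀ x ∈ G, ∃ g : Nabla, wellBelow g (⊤ : Nabla) ∧
          {y : X | wellBelow g (a x y)} ⊆ G := by
  refine fun G => ⟨fun hG x hx => ?_, fun hB x hx => ?_⟩
  · obtain ⟨t, ε, ht, hε, hW⟩ := hG x hx
    have hε' : ENNReal.ofReal ε ≠ 0 := (ENNReal.ofReal_pos.2 hε).ne'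
    refine ⟨stepFn ⟨t, ht⟩ (ENNReal.ofReal ε / 2), stepFn_wellBelow_top (ENNReal.half_pos hε'),
      fun y hy => hW ?_⟩
    have hw : w t x y ≤ ENNReal.ofReal ε / 2 := ha ⟨t, ht⟩ x y ▸ stepFn_le_iff.1 hy.le
    exact hw.trans_lt (ENNReal.half_lt_self hε' ENNReal.ofReal_ne_top)
  · obtain ⟨g, hg, hball⟩ := hB x hx
    obtain ⟨t, ε, hε, hgt⟩ := exists_stepFn_le_of_wellBelow_top hg
    exact ⟨t.1, ε, t.2, hε, fun y hy =>
      hball ((wellBelow_stepFn ((ha t x y).trans_lt hy)).mono_left hgt)⟩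

/-- for a quasi-pseudometric modular space `(X,w)` with associated
`∇`-category structure `a_w(x,y)(t) = w(t,x,y)`, the topology `T(w)` generated by
the modular entourages coincides with the Flagg open-ball topology of `a_w`,
whose basic ball at `x` of radius `g ◁ 𝟎 = ⊤` is `B(x,g) = {y : g ◁ a_w(x,y)}`. -/
theorem stmt_19 {X : Type*} (w : ℝ → X → X → ℝ≥0∞)
    (hM1 : ∀ t : ℝ, 0 < t → ∀ x : X, w t x x = 0)
    (hM2 : ∀ (x y z : X) (t s : ℝ), 0 < t → 0 < s →
      w (t + s) x y ≤ w t x z + w s z y)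
    (a : X → X → Nabla)
    (ha : ∀ (t : Rpos) (x y : X), OrderDual.ofDual (a x y t) = w t.1 x y) :
    ∀ G : Set X,
      modOpen w G ↔
        ∀ x ∈ G, ∃ g : Nabla, wellBelow g (⊤ : Nabla) ∧
          {y : X | wellBelow g (a x y)} ⊆ G :=
  stmt_19_general w a ha
end
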